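/- Let X be the one-point compactification of a countably infinite discrete set 𝓕 with limit point G, and let R_X be the ring of continuous functions X → ℚ (with ℚ discrete). Then the sequence 0 → R_X → (∏_{F∈𝓕} ℚ) × ℚ → 𝓘⁻¹∏_{F∈𝓕} ℚ → 0 is exact, where the first map sends a continuous function f to (f|_𝓕, f(G)), the second map sends (g, v) to [g] − [v·1], and [·] denotes the class in the localization 𝓘⁻¹∏ℚ at idempotents with cofinite support. -/

import Mathlib

/-- The idempotent of `∏_{F ∈ ι} ℚ` with support `U`. -/
noncomputable def eU {ι : Type} (U : Set ι) : ι → ℚ :=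
  Set.indicator U (fun _ => (1 : ℚ))

/-- The multiplicatively closed set `𝓘` of idempotents of `∏_{F ∈ ι} ℚ`
with cofinite support. -/
noncomputable def Icof (ι : Type) : Submonoid (ι → ℚ) where
  carrier := {f | ∃ U : Set ι, Uᶜ.Finite ∧ f = eU U}
  one_mem' := ⟨Set.univ, by simp, by funext x; simp [eU]⟩
  mul_mem' := by
    rintro f g ⟨U, hU, rfl⟩ ⟨V, hV, rfl⟩
    refine ⟨U ∩ V, ?_, ?_⟩
    · rw [Set.compl_inter]; exact hU.union hV
    · funext x
      by_cases hx1 : x ∈ U <;> by_cases hx2 : x ∈ V <;>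
        simp [eU, Set.indicator_apply, hx1, hx2]

/-- `R_X → (∏_{F∈𝓕} ℚ) × ℚ`, `f ↦ (f|_𝓕, f(G))`, where `R_X` is the ring of
continuous (= locally constant) functions on the one-point compactification. -/
noncomputable def alphaMap :
    LocallyConstant (OnePoint ℕ) ℚ → (ℕ → ℚ) × ℚ :=
  fun f => (fun n => f (OnePoint.some n), f OnePoint.infty)

/-- `(∏_{F∈𝓕} ℚ) × ℚ → 𝓘⁻¹ ∏_{F∈𝓕} ℚ`, `(g, v) ↦ [g] − [v·1]`. -/
noncomputable def betaMap :
    (ℕ → ℚ) × ℚ → Localization (Icof ℕ) :=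
  fun p => algebraMap (ℕ → ℚ) (Localization (Icof ℕ)) p.1 -
    algebraMap (ℕ → ℚ) (Localization (Icof ℕ)) (fun _ => p.2)

/-!
In `𝓘⁻¹∏ℚ` two functions become equal exactly when they agree off a finite set: an idempotent
`e_U` kills precisely the coordinates outside `U`. In particular every `e_U` becomes `1`, so the
localization is a quotient of `∏ℚ` and `β` is onto. On the other side, a function on the one-point
compactification of a discrete set is locally constant exactly when it agrees with its value at
`∞` off a finite set. Both descriptions of `ker β` and `im α` are thus the same cofiniteness
condition.
-/

open Filter OnePoint

theorem isLocallyConstant_onePoint_iff {X Y : Type*} [TopologicalSpace X] [DiscreteTopology X]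
    (f : OnePoint X → Y) : IsLocallyConstant f ↔ ∀ᶠ x : X in cofinite, f x = f ∞ := by
  simp [IsLocallyConstant.iff_eventually_eq, OnePoint.forall, nhds_infty_eq, nhds_coe_eq,
    nhds_discrete, coclosedCompact_eq_cocompact, cocompact_eq_cofinite]

section Localization

variable {ι : Type}

theorem eU_mul_eq_eU_mul_iff {U : Set ι} {f g : ι → ℚ} :
    eU U * f = eU U * g ↔ ∀ i ∈ U, f i = g i := by
  simp only [funext_iff, Pi.mul_apply, eU]
  refine forall_congr' fun i => ?_
  by_cases hi : i ∈ U <;> simp [hi]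

theorem algebraMap_Icof_eq_iff {f g : ι → ℚ} :
    algebraMap (ι → ℚ) (Localization (Icof ι)) f = algebraMap _ _ g ↔ f =ᶠ[cofinite] g := by
  rw [IsLocalization.eq_iff_exists (Icof ι)]
  constructor
  · rintro ⟨⟨_, U, hU, rfl⟩, hfg⟩
    exact mem_of_superset (mem_cofinite.2 hU) (eU_mul_eq_eU_mul_iff.1 hfg)
  · intro hfg
    exact ⟨⟨eU {i | f i = g i}, _, hfg, rfl⟩, eU_mul_eq_eU_mul_iff.2 fun _ hi => hi⟩

theorem algebraMap_Icof_eq_one {e : ι → ℚ} (he : e ∈ Icof ι) :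
    algebraMap (ι → ℚ) (Localization (Icof ι)) e = 1 := by
  obtain ⟨U, hU, rfl⟩ := he
  rw [← map_one (algebraMap (ι → ℚ) _), algebraMap_Icof_eq_iff]
  exact mem_of_superset (mem_cofinite.2 hU) fun i hi => by simp [eU, hi]

theorem algebraMap_Icof_surjective :
    Function.Surjective (algebraMap (ι → ℚ) (Localization (Icof ι))) := by
  intro z
  obtain ⟨⟨g, e⟩, rfl⟩ := IsLocalization.mk'_surjective (Icof ι) z
  exact ⟨g, (IsLocalization.mk'_eq_iff_eq_mul.2 (by rw [algebraMap_Icof_eq_one e.2, mul_one])).symm⟩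

end Localization

theorem alphaMap_injective : Function.Injective alphaMap := fun _ _ hfg =>
  LocallyConstant.ext <| OnePoint.forall.2
    ⟨congrArg Prod.snd hfg, fun n => congrFun (congrArg Prod.fst hfg) n⟩

theorem betaMap_eq_zero_iff (p : (ℕ → ℚ) × ℚ) :
    betaMap p = 0 ↔ ∀ᶠ n in cofinite, p.1 n = p.2 := by
  rw [betaMap, sub_eq_zero, algebraMap_Icof_eq_iff]
  rfl

theorem betaMap_surjective : Function.Surjective betaMap := fun z =>
  let ⟨g, hg⟩ := algebraMap_Icof_surjective z
  ⟨(g, 0), by rw [betaMap, ← hg]; exact (sub_eq_self.2 (map_zero _))⟩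

/-- The sequence `0 → R_X → (∏_{F∈𝓕} ℚ) × ℚ → 𝓘⁻¹ ∏_{F∈𝓕} ℚ → 0` is exact:
`α` is injective, the kernel of `β` is exactly the image of `α`, and `β` is
surjective. -/
theorem stmt8 :
    Function.Injective alphaMap ∧
    (∀ p : (ℕ → ℚ) × ℚ, betaMap p = 0 ↔ ∃ f, alphaMap f = p) ∧
    Function.Surjective betaMap := by
  refine ⟨alphaMap_injective, fun p => (betaMap_eq_zero_iff p).trans ⟨fun h => ?_, ?_⟩,
    betaMap_surjective⟩
  · exact ⟨⟨fun x => x.elim p.2 p.1, (isLocallyConstant_onePoint_iff _).2 h⟩, rfl⟩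
  · rintro ⟨f, rfl⟩
    exact (isLocallyConstant_onePoint_iff f).1 f.isLocallyConstant
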